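/- Every finite non-solvable group has a maximal subgroup that is non-nilpotent and non-normal. -/

import Mathlib

/-!
In a minimal counterexample every proper quotient is solvable, because maximal subgroups of
`G ⧸ K` lift to maximal subgroups of `G` and nilpotency and normality pass to images; hence `G`
has no nontrivial normal nilpotent subgroup.

If `G` is simple, all its maximal subgroups are nilpotent and self-normalizing. Normalizers grow
in nilpotent groups, so distinct maximal subgroups intersect trivially and every maximal subgroup
is malnormal. The nontrivial elements conjugate into a malnormal subgroup `H` number
`|G| - |G : H|`, and two non-conjugate maximal subgroups already account for more than `|G|`
elements.

Otherwise let `N` be a proper minimal normal subgroup and `r` a prime dividing `|G : N|`. For each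
prime `q` dividing `|N|`, the Frattini argument puts the normalizer of a Sylow `q`-subgroup of `N`
into a maximal subgroup `M_q` with `M_q N = G`; it is not normal, hence nilpotent, and `r` divides
`|M_q|`. A nilpotent maximal subgroup is the normalizer of a Sylow `r`-subgroup of `G`, so all the
`M_q` are conjugate, and one of them contains a Sylow subgroup of `N` for every prime: it contains
`N`, contradicting `M_q N = G`.
-/

open Subgroup

section

variable {G : Type*} [Group G]

namespace Subgroup

theorem lt_inf_normalizer_of_lt {A D : Subgroup G} (hA : Group.IsNilpotent A) (h : D < A) :
    D < A ⊓ normalizer D := by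
  have hD : D.subgroupOf A < ⊤ := by
    rw [lt_top_iff_ne_top, Ne, subgroupOf_eq_top]
    exact h.not_ge
  obtain ⟨x, hxN, hxD⟩ := SetLike.exists_of_lt (Group.normalizerCondition_of_isNilpotent _ hD)
  rw [← subgroupOf_normalizer_eq h.le, mem_subgroupOf] at hxN
  refine SetLike.lt_iff_le_and_exists.mpr
    ⟨le_inf h.le le_normalizer, (x : G), mem_inf.mpr ⟨x.2, hxN⟩, ?_⟩
  exact fun hx => hxD (mem_subgroupOf.mpr hx)

theorem index_dvd_card_of_sup_eq_top {M N : Subgroup G} [N.Normal] (h : M ⊔ N = ⊤) :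
    N.index ∣ Nat.card M := by
  rw [← N.relIndex_top_right, ← h, relIndex_sup_right]
  exact relIndex_dvd_card N M

theorem le_of_forall_ordProj_dvd_card_inf [Finite G] {H K : Subgroup G}
    (h : ∀ p : ℕ, p.Prime → p ∣ Nat.card H →
      ordProj[p] (Nat.card H) ∣ Nat.card (H ⊓ K : Subgroup G)) :
    H ≤ K := by
  have hdvd : Nat.card H ∣ Nat.card (H ⊓ K : Subgroup G) := by
    rw [← Nat.factorization_prime_le_iff_dvd Nat.card_pos.ne' Nat.card_pos.ne']
    intro p hp
    by_cases hpH : p ∣ Nat.card H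
    · exact (hp.pow_dvd_iff_le_factorization Nat.card_pos.ne').mp (h p hp hpH)
    · simp [Nat.factorization_eq_zero_of_not_dvd hpH]
  exact inf_eq_left.mp (eq_of_le_of_card_ge inf_le_left (Nat.le_of_dvd Nat.card_pos hdvd))

theorem index_lt_card_of_ne_bot [Finite G] {K : Subgroup G} (hK : K ≠ ⊥) :
    K.index < Nat.card G := by
  rw [← K.card_mul_index]
  exact lt_mul_left (Nat.pos_of_ne_zero K.index_ne_zero_of_finite)
    ((one_lt_card_iff_ne_bot K).mpr hK)

end Subgroup

theorem IsPGroup.exists_sylow_eq_of_forall_le [Finite G] {p : ℕ} [Fact p.Prime] {K : Subgroup G}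
    (hK : IsPGroup p K)
    (h : ∀ Q : Subgroup G, IsPGroup p Q → Q ≤ normalizer K → Q ≤ K) :
    ∃ R : Sylow p G, (R : Subgroup G) = K := by
  obtain ⟨R, hKR⟩ := hK.exists_le_sylow
  refine ⟨R, (eq_of_le_of_not_lt hKR fun hlt => ?_).symm⟩
  have := lt_inf_normalizer_of_lt R.isPGroup'.isNilpotent hlt
  exact this.not_ge (h _ (R.isPGroup'.to_le inf_le_left) inf_le_right)

theorem IsPGroup.le_map_sylow_of_isNilpotent [Finite G] {p : ℕ} [Fact p.Prime]
    {M Q : Subgroup G} (hM : Group.IsNilpotent M) (P : Sylow p M) (hQ : IsPGroup p Q)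
    (hQM : Q ≤ M) :
    Q ≤ P.map M.subtype := by
  have : Unique (Sylow p M) :=
    Sylow.unique_of_normal P (Sylow.normal_of_normalizerCondition
      Group.normalizerCondition_of_isNilpotent P)
  obtain ⟨P', hP'⟩ := hQ.comap_subtype (K := M) |>.exists_le_sylow
  rw [Subsingleton.elim P' P] at hP'
  intro x hx
  exact ⟨⟨x, hQM hx⟩, hP' hx, rfl⟩

theorem IsCoatom.normalizer_eq {M K : Subgroup G} (hM : IsCoatom M)
    (hMK : M ≤ normalizer K) (hK : ¬ K.Normal) : normalizer K = M :=
  (hM.le_iff.mp hMK).resolve_left (mt normalizer_eq_top_iff.mp hK)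

theorem Sylow.le_normalizer_map_of_isNilpotent [Finite G] {p : ℕ} [Fact p.Prime]
    {M : Subgroup G} (hM : Group.IsNilpotent M) (P : Sylow p M) :
    M ≤ normalizer (P.map M.subtype) := by
  have := normalizer_eq_top_iff.mpr
    (P.normal_of_normalizerCondition Group.normalizerCondition_of_isNilpotent)
  calc M = (normalizer (P : Subgroup M)).map M.subtype := by
        rw [this, ← MonoidHom.range_eq_map, range_subtype]
    _ ≤ _ := le_normalizer_map _

theorem IsCoatom.exists_sylow_normalizer_eq [Finite G] {M : Subgroup G} (hM : IsCoatom M)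
    (hMnil : Group.IsNilpotent M) {r : ℕ} [Fact r.Prime] (hr : r ∣ Nat.card M)
    (hnormal : ∀ K : Subgroup G, K.Normal → IsPGroup r K → K = ⊥) :
    ∃ R : Sylow r G, normalizer (R : Subgroup G) = M := by
  let P : Sylow r M := default
  have hPpg : IsPGroup r (P.map M.subtype) := P.isPGroup'.map _
  have hPne : P.map M.subtype ≠ ⊥ := by
    rw [Ne, map_eq_bot_iff_of_injective _ M.subtype_injective]
    exact P.ne_bot_of_dvd_card hr
  have hN : normalizer (P.map M.subtype) = M :=
    hM.normalizer_eq (P.le_normalizer_map_of_isNilpotent hMnil) fun h => hPne (hnormal _ h hPpg)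
  obtain ⟨R, hR⟩ := hPpg.exists_sylow_eq_of_forall_le fun Q hQ hQN =>
    hQ.le_map_sylow_of_isNilpotent hMnil P (hN ▸ hQN)
  exact ⟨R, by rw [hR, hN]⟩

theorem IsCoatom.map_conj {M : Subgroup G} (hM : IsCoatom M) (g : G) :
    IsCoatom (M.map (MulAut.conj g : G →* G)) :=
  ((MulAut.conj g).mapSubgroup.isCoatom_iff M).mpr hM

theorem Sylow.normalizer_smul {p : ℕ} (g : G) (R : Sylow p G) :
    normalizer ((g • R : Sylow p G) : Subgroup G) =
      (normalizer (R : Subgroup G)).map (MulAut.conj g : G →* G) :=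
  (map_equiv_normalizer_eq _ _).symm

def Subgroup.IsMalnormal (H : Subgroup G) : Prop :=
  ∀ g ∉ H, ∀ x ∈ H, g * x * g⁻¹ ∈ H → x = 1

namespace Subgroup.IsMalnormal

variable {H : Subgroup G}

theorem ncard_conj_fiber (hH : H.IsMalnormal) {g₀ : G} {h₀ : H} (hh₀ : h₀ ≠ 1) :
    {p : G × H | p.2 ≠ 1 ∧ p.1 * p.2 * p.1⁻¹ = g₀ * h₀ * g₀⁻¹}.ncard =
      Nat.card H := by
  let j : H → G × H := fun k => (g₀ * k, k⁻¹ * h₀ * k)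
  have hj : Function.Injective j := fun k k' hk => by simpa [j] using congrArg Prod.fst hk
  rw [← Set.ncard_range_of_injective hj]
  congr 1
  ext ⟨g, h⟩
  simp only [Set.mem_ofPred_eq, Set.mem_range, j, Prod.ext_iff]
  constructor
  · rintro ⟨hh, hgh⟩
    have hconj : (g₀⁻¹ * g) * h * (g₀⁻¹ * g)⁻¹ = h₀ := by
      calc _ = g₀⁻¹ * (g * h * g⁻¹) * g₀ := by group
        _ = h₀ := by rw [hgh]; group
    have hc : g₀⁻¹ * g ∈ H := by
      by_contra hc
      exact hh (Subtype.ext (hH _ hc h h.2 (hconj ▸ h₀.2)))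
    refine ⟨⟨_, hc⟩, by simp, Subtype.ext ?_⟩
    simp only [coe_mul, coe_inv, ← hconj]
    group
  · rintro ⟨k, rfl, rfl⟩
    refine ⟨fun h1 => hh₀ ?_, ?_⟩
    · rwa [mul_assoc, inv_mul_eq_one, eq_comm, mul_eq_right] at h1
    · simp only [coe_mul, coe_inv]
      group

theorem ncard_conjugatesOfSet_add_index [Finite G] (hH : H.IsMalnormal) :
    (Group.conjugatesOfSet (H : Set G)).ncard + H.index = Nat.card G + 1 := by
  classical
  have := Fintype.ofFinite G
  -- Count `G × (H \ {1})` along `φ`: malnormality makes every fiber a copy of `H`.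
  let φ : G × H → G := fun p => p.1 * p.2 * p.1⁻¹
  let s : Finset (G × H) := Finset.univ.filter (·.2 ≠ 1)
  have hs : s.card = Nat.card G * (Nat.card H - 1) := by
    have : s = Finset.univ ×ˢ Finset.univ.erase 1 := by ext; simp [s]
    rw [this, Finset.card_product, Finset.card_erase_of_mem (Finset.mem_univ _), Finset.card_univ,
      Finset.card_univ, Nat.card_eq_fintype_card, Nat.card_eq_fintype_card]
  have himage : (↑(s.image φ) : Set G) = Group.conjugatesOfSet (H : Set G) \ {1} := by
    ext y
    simp only [ne_eq, Finset.coe_image, Finset.coe_filter, Finset.mem_univ, true_and,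
      Set.mem_image, Set.mem_ofPred_eq, Prod.exists, Subtype.exists, mk_eq_one, exists_and_left,
      exists_prop, Set.mem_sdiff, Group.mem_conjugatesOfSet_iff, SetLike.mem_coe, isConj_iff,
      Set.mem_singleton_iff, φ, s]
    constructor
    · rintro ⟨g, h, hh1, hhH, rfl⟩
      exact ⟨⟨h, hhH, g, rfl⟩, conj_eq_one_iff.not.mpr hh1⟩
    · rintro ⟨⟨h, hhH, g, rfl⟩, hy⟩
      exact ⟨g, h, conj_eq_one_iff.not.mp hy, hhH, rfl⟩
  have hfib : ∀ y ∈ s.image φ, (s.filter (φ · = y)).card = Nat.card H := by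
    intro y hy
    obtain ⟨⟨g₀, h₀⟩, hp, rfl⟩ := Finset.mem_image.mp hy
    rw [← hH.ncard_conj_fiber (g₀ := g₀) (by simpa [s] using hp), ← Set.ncard_coe_finset]
    congr 1
    ext
    simp [s, φ]
  have hcount := Finset.card_eq_sum_card_image φ s
  rw [Finset.sum_congr rfl hfib, Finset.sum_const, smul_eq_mul, hs] at hcount
  have hU := Set.ncard_sdiff_singleton_add_one (Group.subset_conjugatesOfSet H.one_mem)
  rw [← himage, Set.ncard_coe_finset] at hU
  have hGH := H.card_mul_index
  obtain ⟨m, hm⟩ : ∃ m, Nat.card H = m + 1 :=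
    ⟨_, (Nat.succ_pred_eq_of_pos Nat.card_pos).symm⟩
  rw [hm, Nat.add_sub_cancel, ← hGH, hm] at hcount
  have hc : (s.image φ).card = H.index * m :=
    Nat.eq_of_mul_eq_mul_right (by omega : 0 < m + 1) (by rw [← hcount]; ring)
  rw [← hU, hc, ← hGH, hm]
  ring

theorem conjugatesOfSet_ne_univ [Finite G] (hH : H.IsMalnormal) (hH' : H ≠ ⊤) :
    Group.conjugatesOfSet (H : Set G) ≠ Set.univ := by
  intro h
  have := hH.ncard_conjugatesOfSet_add_index
  rw [h, Set.ncard_univ] at this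
  have := one_lt_index_of_ne_top hH'
  omega

theorem exists_ne_one_mem_conjugatesOfSet_inter [Finite G] {K : Subgroup G}
    (hH : H.IsMalnormal) (hK : K.IsMalnormal) (hH' : H ≠ ⊥) (hK' : K ≠ ⊥) :
    ∃ x ≠ 1, x ∈ Group.conjugatesOfSet (H : Set G) ∩ Group.conjugatesOfSet (K : Set G) := by
  by_contra! h
  have hinter :
      (Group.conjugatesOfSet (H : Set G) ∩ Group.conjugatesOfSet (K : Set G)).ncard ≤ 1 :=
    (Set.ncard_le_ncard (t := {1}) fun x hx => of_not_not fun hx1 => h x hx1 hx).trans_eq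
      (Set.ncard_singleton (1 : G))
  have hunion := Set.ncard_union_add_ncard_inter (Group.conjugatesOfSet (H : Set G))
    (Group.conjugatesOfSet (K : Set G))
  have hle := Set.ncard_le_card
    (Group.conjugatesOfSet (H : Set G) ∪ Group.conjugatesOfSet (K : Set G))
  have h2H : 2 * H.index ≤ Nat.card G := by
    rw [← H.card_mul_index]
    exact Nat.mul_le_mul_right _ ((one_lt_card_iff_ne_bot H).mpr hH')
  have h2K : 2 * K.index ≤ Nat.card G := by
    rw [← K.card_mul_index]
    exact Nat.mul_le_mul_right _ ((one_lt_card_iff_ne_bot K).mpr hK')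
  have := hH.ncard_conjugatesOfSet_add_index
  have := hK.ncard_conjugatesOfSet_add_index
  omega

end Subgroup.IsMalnormal

section SimpleGroup

variable [Finite G] [IsSimpleGroup G]

theorem IsSimpleGroup.eq_of_isCoatom_of_inf_ne_bot
    (hnil : ∀ M : Subgroup G, IsCoatom M → Group.IsNilpotent M) {A B : Subgroup G}
    (hA : IsCoatom A) (hB : IsCoatom B) (hAB : A ⊓ B ≠ ⊥) : A = B := by
  by_contra hne
  let S (D : Subgroup G) : Prop :=
    D ≠ ⊥ ∧ ∃ A B : Subgroup G, IsCoatom A ∧ IsCoatom B ∧ A ≠ B ∧ A ⊓ B = D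
  obtain ⟨D, hD⟩ := exists_maximal_of_wellFoundedGT S ⟨A ⊓ B, hAB, A, B, hA, hB, hne, rfl⟩
  obtain ⟨hD1, A, B, hA, hB, hne, rfl⟩ := hD.prop
  -- By maximality of `A ⊓ B`, normalizer growth in `A` and in `B` forces both of them to equal
  -- a maximal subgroup `C` containing the normalizer of `A ⊓ B`.
  have hN : normalizer ((A ⊓ B : Subgroup G) : Set G) ≠ ⊤ := by
    rw [Ne, normalizer_eq_top_iff]
    intro h
    rcases IsSimpleGroup.eq_bot_or_eq_top_of_normal _ h with h | h
    · exact hD1 h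
    · exact hA.1 (top_le_iff.mp (h ▸ inf_le_left))
  obtain ⟨C, hC, hNC⟩ := (eq_top_or_exists_le_coatom _).resolve_left hN
  have hC_eq : ∀ X, IsCoatom X → A ⊓ B < X → X = C := by
    intro X hX hlt
    by_contra hXC
    have h1 : A ⊓ B < X ⊓ C :=
      (lt_inf_normalizer_of_lt (hnil X hX) hlt).trans_le (inf_le_inf_left X hNC)
    exact h1.ne (hD.eq_of_le ⟨(bot_le.trans_lt h1).ne', X, C, hX, hC, hXC, rfl⟩ h1.le)
  have hAB : A ⊓ B < A := inf_lt_left.mpr fun h => hne ((hA.le_iff_eq hB.1).mp h).symm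
  have hBA : A ⊓ B < B := inf_lt_right.mpr fun h => hne ((hB.le_iff_eq hA.1).mp h)
  exact hne ((hC_eq A hA hAB).trans (hC_eq B hB hBA).symm)

theorem IsSimpleGroup.isMalnormal_of_isCoatom
    (hnil : ∀ M : Subgroup G, IsCoatom M → Group.IsNilpotent M) {M : Subgroup G}
    (hM : IsCoatom M) (hM1 : M ≠ ⊥) : M.IsMalnormal := by
  intro g hg x hx hgx
  have hN : normalizer M = M := hM.normalizer_eq le_normalizer fun h =>
    (IsSimpleGroup.eq_bot_or_eq_top_of_normal M h).elim hM1 hM.1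
  have hMg : M ≠ M.map (MulAut.conj g : G →* G) := fun h =>
    hg (hN ▸ mem_normalizer_iff_map_conj_eq.mpr h.symm)
  have hTI : M ⊓ M.map (MulAut.conj g : G →* G) = ⊥ := by
    by_contra h
    exact hMg (eq_of_isCoatom_of_inf_ne_bot hnil hM (hM.map_conj g) h)
  have : g * x * g⁻¹ ∈ M ⊓ M.map (MulAut.conj g : G →* G) := ⟨hgx, mem_map_of_mem _ hx⟩
  rwa [hTI, mem_bot, conj_eq_one_iff] at this

theorem IsSimpleGroup.isNilpotent_of_forall_isCoatom
    (hnil : ∀ M : Subgroup G, IsCoatom M → Group.IsNilpotent M) : Group.IsNilpotent G := by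
  by_contra hG
  have hzpowers (x : G) : zpowers x ≠ ⊤ := fun hx => by
    have : IsCyclic G := isCyclic_iff_exists_zpowers_eq_top.mpr ⟨x, hx⟩
    let := IsCyclic.commGroup (α := G)
    exact hG inferInstance
  have hbot {M : Subgroup G} (hM : IsCoatom M) : M ≠ ⊥ := by
    rintro rfl
    obtain ⟨x, hx⟩ := exists_ne (1 : G)
    exact hzpowers x (hM.lt_iff.mp (bot_lt_iff_ne_bot.mpr (zpowers_ne_bot.mpr hx)))
  have hmal {M : Subgroup G} (hM : IsCoatom M) := isMalnormal_of_isCoatom hnil hM (hbot hM)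
  obtain ⟨A, hA, -⟩ := (eq_top_or_exists_le_coatom (⊥ : Subgroup G)).resolve_left bot_ne_top
  obtain ⟨y, hy⟩ :=
    (Set.ne_univ_iff_exists_notMem _).mp ((hmal hA).conjugatesOfSet_ne_univ hA.1)
  obtain ⟨B, hB, hyB⟩ := (eq_top_or_exists_le_coatom (zpowers y)).resolve_left (hzpowers y)
  obtain ⟨x, hx1, hxA, hxB⟩ :=
    (hmal hA).exists_ne_one_mem_conjugatesOfSet_inter (hmal hB) (hbot hA) (hbot hB)
  obtain ⟨a, ha, hax⟩ := Group.mem_conjugatesOfSet_iff.mp hxA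
  obtain ⟨b, hb, hbx⟩ := Group.mem_conjugatesOfSet_iff.mp hxB
  obtain ⟨c, rfl⟩ := isConj_iff.mp (hax.trans hbx.symm)
  have hb1 : c * a * c⁻¹ ≠ 1 := fun h => hx1 (isConj_one_right.mp (h ▸ hbx))
  have hBA : B = A.map (MulAut.conj c : G →* G) := by
    refine eq_of_isCoatom_of_inf_ne_bot hnil hB (hA.map_conj c) fun h => hb1 ?_
    rw [← mem_bot, ← h]
    exact ⟨hb, mem_map_of_mem _ ha⟩
  have hyA : c⁻¹ * y * c ∈ A := mem_map_equiv.mp (hBA ▸ hyB (mem_zpowers y))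
  exact hy (Group.mem_conjugatesOfSet_iff.mpr ⟨_, hyA, isConj_iff.mpr ⟨c, by group⟩⟩)

end SimpleGroup

def CoatomsNilpotentOrNormal (G : Type*) [Group G] : Prop :=
  ∀ M : Subgroup G, IsCoatom M → Group.IsNilpotent M ∨ M.Normal

namespace CoatomsNilpotentOrNormal

theorem of_surjective {H : Type*} [Group H] {f : G →* H} (hf : Function.Surjective f)
    (h : CoatomsNilpotentOrNormal G) : CoatomsNilpotentOrNormal H := by
  intro M hM
  rw [← map_comap_eq_self_of_surjective hf M]
  refine (h _ (isCoatom_comap_of_surjective hf hM)).imp (fun hnil => ?_) (·.map f hf)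
  exact Group.nilpotent_of_surjective (h := hnil) _ (f.subgroupMap_surjective _)

variable [Finite G]

theorem exists_isCoatom_isNilpotent_normalizer_le (h : CoatomsNilpotentOrNormal G)
    (hF : ∀ K : Subgroup G, K.Normal → Group.IsNilpotent K → K = ⊥) {N : Subgroup G}
    (hN : Minimal (fun K : Subgroup G => K.Normal ∧ K ≠ ⊥) N) {q : ℕ} [Fact q.Prime]
    (hq : q ∣ Nat.card N) (P : Sylow q N) :
    ∃ M : Subgroup G, IsCoatom M ∧ Group.IsNilpotent M ∧
      normalizer (P.map N.subtype) ≤ M := by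
  have := hN.prop.1
  have hP1 : P.map N.subtype ≠ ⊥ := by
    rw [Ne, map_eq_bot_iff_of_injective _ N.subtype_injective]
    exact P.ne_bot_of_dvd_card hq
  have hPN : normalizer (P.map N.subtype : Set G) ≠ ⊤ := fun htop =>
    hP1 (hF _ (normalizer_eq_top_iff.mp htop) (P.isPGroup'.map _).isNilpotent)
  obtain ⟨M, hM, hPM⟩ := (eq_top_or_exists_le_coatom _).resolve_left hPN
  refine ⟨M, hM, (h M hM).resolve_right fun hMn => hM.1 ?_, hPM⟩
  have hPMN : P.map N.subtype ≤ M ⊓ N := le_inf (le_normalizer.trans hPM) (map_subtype_le _)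
  have hMN : M ⊓ N = N :=
    hN.eq_of_le ⟨inferInstance, ne_bot_of_le_ne_bot hP1 hPMN⟩ inf_le_right
  rw [eq_top_iff, ← Sylow.normalizer_sup_eq_top P]
  exact sup_le hPM (inf_eq_right.mp hMN)

theorem eq_top_of_minimal_normal (h : CoatomsNilpotentOrNormal G)
    (hF : ∀ K : Subgroup G, K.Normal → Group.IsNilpotent K → K = ⊥) {N : Subgroup G}
    (hN : Minimal (fun K : Subgroup G => K.Normal ∧ K ≠ ⊥) N) : N = ⊤ := by
  have := hN.prop.1
  by_contra hNtop
  obtain ⟨r, hr, hrN⟩ := Nat.exists_prime_and_dvd (mt index_eq_one.mp hNtop)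
  have := Fact.mk hr
  have hcoatom {q : ℕ} [Fact q.Prime] (hq : q ∣ Nat.card N) (P : Sylow q N) :
      ∃ M : Subgroup G, IsCoatom M ∧ normalizer (P.map N.subtype) ≤ M ∧
        ∃ R : Sylow r G, normalizer (R : Subgroup G) = M := by
    obtain ⟨M, hM, hMnil, hPM⟩ := h.exists_isCoatom_isNilpotent_normalizer_le hF hN hq P
    have hrM : r ∣ Nat.card M := hrN.trans (index_dvd_card_of_sup_eq_top
      (top_le_iff.mp (Sylow.normalizer_sup_eq_top P ▸ sup_le_sup_right hPM N)))
    exact ⟨M, hM, hPM, hM.exists_sylow_normalizer_eq hMnil hrM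
      fun K hK hKr => hF K hK hKr.isNilpotent⟩
  obtain ⟨q₀, hq₀, hq₀N⟩ :=
    Nat.exists_prime_and_dvd ((one_lt_card_iff_ne_bot N).mpr hN.prop.2).ne'
  have := Fact.mk hq₀
  obtain ⟨M₀, hM₀, hPM₀, R₀, hR₀⟩ := hcoatom hq₀N default
  -- All the `M` are normalizers of Sylow `r`-subgroups, hence conjugate to `M₀`, so `M₀`
  -- contains a conjugate of a Sylow `q`-subgroup of `N` for every `q`.
  have hNM₀ : N ≤ M₀ := le_of_forall_ordProj_dvd_card_inf fun q hq hqN => by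
    have := Fact.mk hq
    let P : Sylow q N := default
    obtain ⟨M, -, hPM, R, hR⟩ := hcoatom hqN P
    obtain ⟨g, hg⟩ := MulAction.exists_smul_eq G R R₀
    let X := (P.map N.subtype).map (MulAut.conj g : G →* G)
    have hXN : X ≤ N := (map_mono (map_subtype_le _)).trans (Normal.map_conj_eq N g).le
    have hXM : X ≤ M₀ := by
      rw [← hR₀, ← hg, Sylow.normalizer_smul, hR]
      exact map_mono (le_normalizer.trans hPM)
    have hXcard : Nat.card X = ordProj[q] (Nat.card N) := by
      rw [card_map_of_injective (MulAut.conj g).injective,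
        card_map_of_injective N.subtype_injective, P.card_eq_multiplicity]
    exact hXcard ▸ card_dvd_of_le (le_inf hXN hXM)
  exact hM₀.1 (top_le_iff.mp
    (Sylow.normalizer_sup_eq_top (default : Sylow q₀ N) ▸ sup_le hPM₀ hNM₀))

theorem subsingleton (h : CoatomsNilpotentOrNormal G)
    (hF : ∀ K : Subgroup G, K.Normal → Group.IsNilpotent K → K = ⊥) : Subsingleton G := by
  by_contra hG
  rw [not_subsingleton_iff_nontrivial] at hG
  obtain ⟨N, hN⟩ := exists_minimal_of_wellFoundedLT
    (fun K : Subgroup G => K.Normal ∧ K ≠ ⊥) ⟨⊤, inferInstance, top_ne_bot⟩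
  have hNtop := h.eq_top_of_minimal_normal hF hN
  have : IsSimpleGroup G := ⟨fun K hK => or_iff_not_imp_left.mpr fun hK1 =>
    hNtop ▸ hN.eq_of_le ⟨hK, hK1⟩ (hNtop ▸ le_top)⟩
  have : Group.IsNilpotent G := IsSimpleGroup.isNilpotent_of_forall_isCoatom fun M hM =>
    (h M hM).elim id fun hMn =>
      (IsSimpleGroup.eq_bot_or_eq_top_of_normal M hMn).resolve_right hM.1 ▸ inferInstance
  exact top_ne_bot (hF ⊤ inferInstance inferInstance)

theorem isSolvable (h : CoatomsNilpotentOrNormal G) : Group.IsSolvable G := by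
  induction hn : Nat.card G using Nat.strong_induction_on generalizing G with
  | _ n ih =>
  by_contra hG
  have hF : ∀ K : Subgroup G, K.Normal → Group.IsNilpotent K → K = ⊥ := by
    intro K _ _
    by_contra hK
    have : Group.IsSolvable (G ⧸ K) := ih _ (hn ▸ index_lt_card_of_ne_bot hK)
      (h.of_surjective (QuotientGroup.mk'_surjective K)) rfl
    exact hG ((Group.isSolvable_iff_subgroup_quotient K).mpr ⟨inferInstance, this⟩)
  have := h.subsingleton hF
  exact hG inferInstance

end CoatomsNilpotentOrNormal

end

theorem stmt9 {G : Type*} [Group G] [Fintype G] (hG : ¬ IsSolvable G) :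
    ∃ M : Subgroup G, IsCoatom M ∧ ¬ Group.IsNilpotent ↥M ∧ ¬ M.Normal := by
  by_contra! h
  exact hG (CoatomsNilpotentOrNormal.isSolvable fun M hM => or_iff_not_imp_left.mpr (h M hM))
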